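/- arXiv:1809.07933 — 2 statements merged into one kernel-verified Lean document; each statement's English description precedes it below -/
import Mathlib

section
/- In any semi De Morgan algebra, the kernel operation α* := h(e(α)') satisfies the De Morgan law (α ∩ β)* = α* ∪ β* for all α, β in the kernel K. -/
/-- A semi De Morgan algebra: a bounded distributive lattice with a unary
operation `neg` satisfying (S2)-(S5). -/
class SemiDeMorgan (L : Type*) extends DistribLattice L, BoundedOrder L where
  neg : L → L
  neg_bot : neg ⊥ = ⊤
  neg_top : neg ⊤ = ⊥
  neg_sup : ∀ a b : L, neg (a ⊔ b) = neg a ⊓ neg b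
  neg_neg_inf : ∀ a b : L, neg (neg (a ⊓ b)) = neg (neg a) ⊓ neg (neg b)
  neg_neg_neg : ∀ a : L, neg (neg (neg a)) = neg a

namespace SemiDeMorgan

variable {L : Type*} [SemiDeMorgan L]

/-- The kernel `K = {a'' : a ∈ L}`. -/
abbrev Kernel (L : Type*) [SemiDeMorgan L] : Type _ :=
  {x : L // ∃ a : L, x = neg (neg a)}

/-- `h : L → K`, `a ↦ a''`. -/
def h (a : L) : Kernel L := ⟨neg (neg a), a, rfl⟩

/-- `e : K → L`, the natural inclusion. -/
def e (α : Kernel L) : L := α.1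

/-- `α ∩ β := h (e α ∧ e β)` -/
def kcap (α β : Kernel L) : Kernel L := h (e α ⊓ e β)

/-- `α ∪ β := h ((e α ∨ e β)'')` -/
def kcup (α β : Kernel L) : Kernel L := h (neg (neg (e α ⊔ e β)))

/-- `α* := h ((e α)')` -/
def kstar (α : Kernel L) : Kernel L := h (neg (e α))

/-- `1 := h ⊤` -/
def kone : Kernel L := h (⊤ : L)

/-- `0 := h ⊥` -/
def kzero : Kernel L := h (⊥ : L)

theorem neg_neg_neg_neg (a : L) : neg (neg (neg (neg a))) = neg (neg a) :=
  neg_neg_neg (neg a)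

theorem neg_neg_sup_neg (a b : L) : neg (neg (neg a ⊔ neg b)) = neg (a ⊓ b) := by
  rw [neg_sup, ← neg_neg_inf, neg_neg_neg]

theorem e_h (a : L) : e (h a) = neg (neg a) := rfl

theorem e_injective : Function.Injective (e : Kernel L → L) := fun _ _ => Subtype.ext

theorem e_kstar (α : Kernel L) : e (kstar α) = neg (e α) :=
  neg_neg_neg (e α)

theorem e_kcap (α β : Kernel L) : e (kcap α β) = neg (neg (e α ⊓ e β)) := rfl

theorem e_kcup (α β : Kernel L) : e (kcup α β) = neg (neg (e α ⊔ e β)) := by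
  rw [kcup, e_h, neg_neg_neg_neg]

/-- De Morgan law in the kernel: `(α ∩ β)* = α* ∪ β*`. -/
theorem kernel_star_cap (α β : Kernel L) :
    kstar (kcap α β) = kcup (kstar α) (kstar β) := by
  apply e_injective
  calc e (kstar (kcap α β))
      = neg (neg (neg (e α ⊓ e β))) := by rw [e_kstar, e_kcap]
    _ = neg (e α ⊓ e β) := neg_neg_neg _
    _ = neg (neg (neg (e α) ⊔ neg (e β))) := (neg_neg_sup_neg _ _).symm
    _ = e (kcup (kstar α) (kstar β)) := by rw [e_kcup, e_kstar, e_kstar]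

end SemiDeMorgan
end

section
/- If H = (L, D, e, h) is a heterogeneous lower quasi De Morgan algebra (an HSMA with a ≤ e(h(a)) for all a ∈ L), then the induced semi De Morgan algebra (L, ') with a' := e(h(a)*) satisfies a ≤ a'' for all a ∈ L. -/
/-- A heterogeneous semi De Morgan algebra `(L, D, e, h)`:
`L` a bounded distributive lattice, `D` a De Morgan algebra (with involution
`star` satisfying the De Morgan laws), `e : D → L` an order embedding
preserving finite meets and the bounds, `h : L → D` a surjective bounded
lattice homomorphism, and `h ∘ e = id`. -/
structure HSMA (L D : Type*) [DistribLattice L] [BoundedOrder L]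
    [DistribLattice D] [BoundedOrder D] where
  star : D → D
  star_zero : star ⊥ = ⊤
  star_one : star ⊤ = ⊥
  star_cup : ∀ α β : D, star (α ⊔ β) = star α ⊓ star β
  star_cap : ∀ α β : D, star (α ⊓ β) = star α ⊔ star β
  star_star : ∀ α : D, star (star α) = α
  e : D → L
  e_le_iff : ∀ α β : D, e α ≤ e β ↔ α ≤ β
  e_cap : ∀ α β : D, e (α ⊓ β) = e α ⊓ e β
  e_one : e ⊤ = ⊤
  e_zero : e ⊥ = ⊥
  h : L → D
  h_surj : Function.Surjective h
  h_inf : ∀ a b : L, h (a ⊓ b) = h a ⊓ h b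
  h_sup : ∀ a b : L, h (a ⊔ b) = h a ⊔ h b
  h_top : h ⊤ = ⊤
  h_bot : h ⊥ = ⊥
  h_e : ∀ α : D, h (e α) = α

variable {L D : Type*} [DistribLattice L] [BoundedOrder L]
  [DistribLattice D] [BoundedOrder D]

/-- The derived semi De Morgan negation on `L`: `a' := e ((h a)*)`. -/
def HSMA.neg (H : HSMA L D) (a : L) : L := H.e (H.star (H.h a))

namespace HSMA

theorem h_neg (H : HSMA L D) (a : L) : H.h (H.neg a) = H.star (H.h a) :=
  H.h_e _

theorem neg_neg (H : HSMA L D) (a : L) : H.neg (H.neg a) = H.e (H.h a) := by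
  rw [neg, h_neg, H.star_star]

end HSMA

/-- If `H` is a heterogeneous lower quasi De Morgan algebra
(`a ≤ e (h a)` for all `a`), then the induced SMA satisfies `a ≤ a''`. -/
theorem HSMA.le_neg_neg (H : HSMA L D)
    (hlq : ∀ a : L, a ≤ H.e (H.h a)) :
    ∀ a : L, a ≤ H.neg (H.neg a) := by
  intro a
  rw [H.neg_neg]
  exact hlq a
end
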